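/- Let (Bₙ)ₙ≥₁ be integers with |Bₙ| ≥ 3 for all n. Then for every n, the prototype set condition holds at the second level: the image of the closed unit square under the Hurwitz algorithm satisfies 𝔉₂(-2, 1+iB₁) = the left vertical segment [ -1/2 - i/2, -1/2 + i/2 ), i.e., the cylinder C₂(-2, 1+iB₁) := { z ∈ 𝔉 : a₁(z) = -2, a₂(z) = 1+iB₁ } has empty interior in ℂ. -/

import Mathlib

/-!
Every point of the cylinder has `T z = 1/z + 2 =: w`. The Möbius map `z ↦ 1/(1/z + 2)` sends the
half-plane `Re z ≥ -1/2` onto `Re ≤ 1/2`, whereas `a₂ = 1 + iB₁` forces `Re (1/w) ≥ 1/2`. Hence the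
cylinder lies on the line `Re z = -1/2` (so it has empty interior) and `Re T²z = Re (1/w) - 1 = -1/2`,
with `Im T²z ∈ [-1/2, 1/2)` from the rounding in `a₂`.

Conversely, for `u` on the left edge put `v = u + 1 + iB₁`. Then `Re v = 1/2` and `|Im v| > 2`
because `|B₁| ≥ 3`, so `‖1/v‖ < 1/2` and `z = 1/(1/v - 2) = -1/2 + i/(4 Im v)` lies in `𝔉`,
has digits `-2, 1 + iB₁` and satisfies `T²z = v - (1 + iB₁) = u`.
-/

open Complex

/-- The nearest Gaussian integer to a complex number. -/
noncomputable def nearestGaussianInt (z : ℂ) : ℂ :=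
  (⌊z.re + 1/2⌋ : ℤ) + (⌊z.im + 1/2⌋ : ℤ) * Complex.I

/-- The complex Gauss map (extended by `T 0 = 0`). -/
noncomputable def gaussMap (z : ℂ) : ℂ :=
  if z = 0 then 0 else 1 / z - nearestGaussianInt (1 / z)

/-- The fundamental square 𝔉. -/
def fundSquare : Set ℂ :=
  { w : ℂ | -(1/2) ≤ w.re ∧ w.re < 1/2 ∧ -(1/2) ≤ w.im ∧ w.im < 1/2 }

/-- The level-two cylinder `C₂(-2, 1 + iB₁)`. -/
noncomputable def cyl2 (B₁ : ℤ) : Set ℂ :=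
  { z : ℂ | z ∈ fundSquare ∧ z ≠ 0 ∧ nearestGaussianInt (1 / z) = -2 ∧
      gaussMap z ≠ 0 ∧ nearestGaussianInt (1 / gaussMap z) = 1 + (B₁ : ℂ) * Complex.I }

lemma floor_add_half_eq_iff {r : ℝ} {n : ℤ} :
    ⌊r + 1/2⌋ = n ↔ n - 1/2 ≤ r ∧ r < n + 1/2 := by
  rw [Int.floor_eq_iff]
  constructor <;> rintro ⟨h₁, h₂⟩ <;> constructor <;> linarith

lemma nearestGaussianInt_eq_iff {u : ℂ} {m n : ℤ} :
    nearestGaussianInt u = m + n * I ↔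
      (m - 1/2 ≤ u.re ∧ u.re < m + 1/2) ∧ (n - 1/2 ≤ u.im ∧ u.im < n + 1/2) := by
  simp only [nearestGaussianInt, Complex.ext_iff, add_re, add_im, intCast_re, intCast_im,
    mul_re, mul_im, I_re, I_im, mul_zero, mul_one, sub_zero, zero_add, add_zero, Int.cast_inj,
    floor_add_half_eq_iff]

lemma nearestGaussianInt_sub_two_of_norm_lt {w : ℂ} (hw : ‖w‖ < 1/2) :
    nearestGaussianInt (w - 2) = -2 := by
  have hre := abs_lt.mp ((abs_re_le_norm w).trans_lt hw)
  have him := abs_lt.mp ((abs_im_le_norm w).trans_lt hw)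
  have := (nearestGaussianInt_eq_iff (u := w - 2) (m := -2) (n := 0)).mpr
  simp only [sub_re, sub_im, re_ofNat, im_ofNat, sub_zero] at this
  simpa using this ⟨⟨by push_cast; linarith, by push_cast; linarith⟩,
    ⟨by push_cast; linarith, by push_cast; linarith⟩⟩

lemma gaussMap_of_ne_zero {z : ℂ} (hz : z ≠ 0) :
    gaussMap z = z⁻¹ - nearestGaussianInt z⁻¹ := by
  rw [gaussMap, if_neg hz, one_div]

lemma gaussMap_inv_sub_two_of_norm_lt {w : ℂ} (hw : ‖w‖ < 1/2) : gaussMap (w - 2)⁻¹ = w := by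
  have hw2 : w - 2 ≠ 0 := fun h => by
    have := (abs_re_le_norm w).trans_lt hw
    rw [sub_eq_zero.mp h] at this
    norm_num at this
  rw [gaussMap_of_ne_zero (inv_ne_zero hw2), inv_inv, nearestGaussianInt_sub_two_of_norm_lt hw]
  ring

lemma Complex.inv_re_nonneg_iff (z : ℂ) : 0 ≤ z⁻¹.re ↔ 0 ≤ z.re := by
  rw [inv_re]
  rcases eq_or_ne z 0 with rfl | hz
  · simp
  · rw [le_div_iff₀ (normSq_pos.mpr hz), zero_mul]

lemma Complex.inv_re_eq_zero_iff (z : ℂ) : z⁻¹.re = 0 ↔ z.re = 0 := by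
  rw [inv_re, div_eq_zero_iff, normSq_eq_zero]
  constructor
  · rintro (h | rfl) <;> simp [*]
  · exact Or.inl

lemma inv_inv_add_two {z : ℂ} (hz : z ≠ 0) (hz' : 1 + 2 * z ≠ 0) :
    (z⁻¹ + 2)⁻¹ = (1 - (1 + 2 * z)⁻¹) / 2 := by
  have : z⁻¹ + 2 = (1 + 2 * z) / z := by field_simp
  rw [this, inv_div]
  linear_combination (1/2 : ℂ) * mul_inv_cancel₀ hz'

lemma inv_inv_sub_two_half_add_mul_I {t : ℝ} (ht : t ≠ 0) :
    ((1/2 + t * I)⁻¹ - 2)⁻¹ = -1/2 + ((4 * t)⁻¹ : ℝ) * I := by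
  have ht' : (t : ℂ) ≠ 0 := by exact_mod_cast ht
  have hw : 1/2 + t * I ≠ 0 := fun h => ht (by simpa using congrArg im h)
  have : (1/2 + t * I)⁻¹ - 2 = -(2 * t * I) / (1/2 + t * I) := by
    rw [div_eq_mul_inv]
    linear_combination 2 * mul_inv_cancel₀ hw
  rw [this, inv_div, div_eq_iff (by simp [ht', I_ne_zero])]
  push_cast
  linear_combination (1/2 * t * (t : ℂ)⁻¹) * I_sq - (1/2 : ℂ) * mul_inv_cancel₀ ht'

section cyl2

variable {B₁ : ℤ} {z : ℂ}

lemma gaussMap_eq_inv_add_two_of_mem_cyl2 (hz : z ∈ cyl2 B₁) : gaussMap z = z⁻¹ + 2 := by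
  rw [gaussMap_of_ne_zero hz.2.1, ← one_div, hz.2.2.1]
  ring

lemma gaussMap_gaussMap_of_mem_cyl2 (hz : z ∈ cyl2 B₁) :
    gaussMap (gaussMap z) = (gaussMap z)⁻¹ - (1 + B₁ * I) := by
  rw [gaussMap_of_ne_zero hz.2.2.2.1, ← one_div, hz.2.2.2.2, one_div]

lemma inv_gaussMap_bounds_of_mem_cyl2 (hz : z ∈ cyl2 B₁) :
    (1/2 ≤ (gaussMap z)⁻¹.re ∧ (gaussMap z)⁻¹.re < 3/2) ∧
      (B₁ - 1/2 ≤ (gaussMap z)⁻¹.im ∧ (gaussMap z)⁻¹.im < B₁ + 1/2) := by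
  have h := (nearestGaussianInt_eq_iff (u := (gaussMap z)⁻¹) (m := 1) (n := B₁)).mp
    (by simpa only [Int.cast_one, one_div] using hz.2.2.2.2)
  push_cast at h
  exact ⟨⟨by linarith [h.1.1], by linarith [h.1.2]⟩, h.2⟩

lemma re_eq_neg_half_of_mem_cyl2 (hz : z ∈ cyl2 B₁) :
    z.re = -(1/2) ∧ (gaussMap z)⁻¹.re = 1/2 := by
  have hw := gaussMap_eq_inv_add_two_of_mem_cyl2 hz
  have h12 : 1 + 2 * z ≠ 0 := by
    intro h
    apply hz.2.2.2.1
    rw [hw, show z = -1/2 by linear_combination h / 2]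
    norm_num
  have hre : (gaussMap z)⁻¹.re = (1 - (1 + 2 * z)⁻¹.re) / 2 := by
    rw [hw, inv_inv_add_two hz.2.1 h12]
    simp
  have hnonneg : 0 ≤ (1 + 2 * z)⁻¹.re := by
    rw [inv_re_nonneg_iff]
    simp only [add_re, one_re, mul_re, re_ofNat, im_ofNat, zero_mul, sub_zero]
    linarith [hz.1.1]
  have hzero : (1 + 2 * z)⁻¹.re = 0 := by
    linarith [(inv_gaussMap_bounds_of_mem_cyl2 hz).1.1]
  refine ⟨?_, by rw [hre, hzero]; norm_num⟩
  rw [inv_re_eq_zero_iff] at hzero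
  simp only [add_re, one_re, mul_re, re_ofNat, im_ofNat, zero_mul, sub_zero] at hzero
  linarith

end cyl2

lemma norm_inv_lt_half_of_two_lt_abs_im {v : ℂ} (h : 2 < |v.im|) : ‖v⁻¹‖ < 1/2 := by
  rw [norm_inv]
  exact inv_lt_of_inv_lt₀ (by norm_num) (by linarith [abs_im_le_norm v])

lemma inv_inv_sub_two_mem_cyl2 {B₁ : ℤ} {v : ℂ} (hre : v.re = 1/2) (him : 2 < |v.im|)
    (hnear : nearestGaussianInt v = 1 + B₁ * I) : (v⁻¹ - 2)⁻¹ ∈ cyl2 B₁ := by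
  have him0 : v.im ≠ 0 := fun h => by norm_num [h] at him
  have hv0 : v ≠ 0 := fun h => him0 (by simp [h])
  have hsmall := norm_inv_lt_half_of_two_lt_abs_im him
  have hTz := gaussMap_inv_sub_two_of_norm_lt hsmall
  refine ⟨?_, inv_ne_zero fun h => ?_, ?_, ?_, ?_⟩
  · have := abs_lt.mp (show |v.im⁻¹| < 2 by
      rw [abs_inv]; exact inv_lt_of_inv_lt₀ (by norm_num) (by linarith))
    have hv : v = 1/2 + v.im * I := by
      apply Complex.ext <;> simp [hre]
    rw [hv, inv_inv_sub_two_half_add_mul_I him0]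
    norm_num [fundSquare]
    constructor <;> linarith
  · rw [sub_eq_zero.mp h] at hsmall
    norm_num at hsmall
  · rw [one_div, inv_inv, nearestGaussianInt_sub_two_of_norm_lt hsmall]
  · rw [hTz]; exact inv_ne_zero hv0
  · rwa [hTz, one_div, inv_inv]

lemma exists_mem_cyl2_gaussMap_gaussMap_eq {B₁ : ℤ} (hB : 3 ≤ |B₁|) {u : ℂ}
    (hre : u.re = -(1/2)) (him : -(1/2) ≤ u.im) (him' : u.im < 1/2) :
    ∃ z ∈ cyl2 B₁, gaussMap (gaussMap z) = u := by
  set v := u + (1 + B₁ * I) with hv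
  have hvre : v.re = 1/2 := by norm_num [hv, hre]
  have hvim : v.im = u.im + B₁ := by simp [hv]
  have hnear : nearestGaussianInt v = 1 + B₁ * I := by
    have := (nearestGaussianInt_eq_iff (u := v) (m := 1) (n := B₁)).mpr
    simp only [hvre, hvim] at this
    simpa using this ⟨⟨by norm_num, by norm_num⟩, ⟨by linarith, by linarith⟩⟩
  have hvim_gt : 2 < |v.im| := by
    have : (3 : ℝ) ≤ |(B₁ : ℝ)| := by exact_mod_cast hB
    have := abs_sub_abs_le_abs_sub (B₁ : ℝ) (-u.im)
    rw [abs_neg, sub_neg_eq_add, add_comm, ← hvim] at this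
    linarith [abs_le.mpr (⟨by linarith, by linarith⟩ : -(1/2) ≤ u.im ∧ u.im ≤ 1/2)]
  have hv0 : v ≠ 0 := fun h => by norm_num [h] at hvre
  have hsmall := norm_inv_lt_half_of_two_lt_abs_im hvim_gt
  refine ⟨(v⁻¹ - 2)⁻¹, inv_inv_sub_two_mem_cyl2 hvre hvim_gt hnear, ?_⟩
  rw [gaussMap_inv_sub_two_of_norm_lt hsmall, gaussMap_of_ne_zero (inv_ne_zero hv0), inv_inv,
    hnear, hv]
  ring

/-- For `|B₁| ≥ 3`, the prototype set `𝔉₂(-2, 1+iB₁) = T²[C₂(-2, 1+iB₁)]` is the left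
vertical segment `[-1/2 - i/2, -1/2 + i/2)`, and the cylinder has empty interior. -/
theorem stmt_16 (B₁ : ℤ) (hB : 3 ≤ |B₁|) :
    (gaussMap ∘ gaussMap) '' cyl2 B₁ =
      { z : ℂ | z.re = -(1/2) ∧ -(1/2) ≤ z.im ∧ z.im < 1/2 } ∧
    interior (cyl2 B₁) = ∅ := by
  refine ⟨Set.Subset.antisymm ?_ ?_, ?_⟩
  · rintro _ ⟨z, hz, rfl⟩
    have hb := inv_gaussMap_bounds_of_mem_cyl2 hz
    simp only [Function.comp_apply, Set.mem_ofPred_eq, gaussMap_gaussMap_of_mem_cyl2 hz, sub_re,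
      sub_im, add_re, add_im, one_re, one_im, mul_re, mul_im, intCast_re, intCast_im, I_re, I_im,
      (re_eq_neg_half_of_mem_cyl2 hz).2]
    refine ⟨by norm_num, by linarith [hb.2.1], by linarith [hb.2.2]⟩
  · rintro u ⟨hre, him, him'⟩
    exact exists_mem_cyl2_gaussMap_gaussMap_eq hB hre him him'
  · have hsub : cyl2 B₁ ⊆ re ⁻¹' {-(1/2)} := fun z hz => (re_eq_neg_half_of_mem_cyl2 hz).1
    simpa [interior_preimage_re] using interior_mono hsub
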